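/- arXiv:2203.08184 — 3 statements merged into one kernel-verified Lean document; each statement's English description precedes it below -/
import Mathlib

section
/- For all integers N, i, k with 1 ≤ i ≤ N and 0 ≤ k ≤ i-1, the identity N!/((i-1)!·(N-i)!) · C(i-1, k) = C(N, i-k-1) · C(N-i+k, k) · (N-i+k+1) holds. -/
namespace Nat

theorem factorial_eq_choose_mul_sub_mul_factorial_mul_factorial {n m : ℕ} (hmn : m < n) :
    n ! = n.choose m * (n - m) * (m ! * (n - m - 1)!) := by
  rw [← choose_mul_factorial_mul_factorial hmn.le, ← mul_factorial_pred (n := n - m) (by omega)]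
  ring

theorem cast_factorial_div_factorial_mul_factorial_pred {n m : ℕ} (hmn : m < n) :
    (n ! : ℝ) / (m ! * (n - m - 1)!) = n.choose m * (n - m : ℕ) := by
  rw [factorial_eq_choose_mul_sub_mul_factorial_mul_factorial hmn]
  push_cast
  field_simp

/-- Choosing `m` of `n` and then `k` of those `m` amounts to choosing first the `m - k` that are
dropped; the factor `n - m` then turns `(n - m + k).choose k` into `(n - m - 1 + k).choose k`. -/
theorem choose_mul_choose_mul_sub {n m k : ℕ} (hmn : m < n) (hkm : k ≤ m) :
    n.choose m * m.choose k * (n - m) =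
      n.choose (m - k) * (n - m - 1 + k).choose k * (n - m + k) := by
  have hchoose : n.choose m * m.choose k = n.choose (m - k) * (n - m + k).choose k := by
    rw [← choose_symm hkm, choose_mul (sub_le m k),
      show n - (m - k) = n - m + k by omega, show m - (m - k) = k by omega]
  have hsucc := choose_mul_succ_eq (n - m - 1 + k) k
  rw [show n - m - 1 + k + 1 = n - m + k by omega, show n - m + k - k = n - m by omega] at hsucc
  rw [hchoose, mul_assoc, ← hsucc, mul_assoc]

end Nat

/-- The combinatorial identity
`N!/((i-1)!·(N-i)!) · C(i-1, k) = C(N, i-k-1) · C(N-i+k, k) · (N-i+k+1)`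
for `1 ≤ i ≤ N` and `0 ≤ k ≤ i-1`. -/
theorem factorial_choose_identity (N i k : ℕ) (hi1 : 1 ≤ i) (hiN : i ≤ N) (hk : k ≤ i - 1) :
    (N.factorial : ℝ) / ((i - 1).factorial * (N - i).factorial) * ((i - 1).choose k : ℝ)
      = (N.choose (i - k - 1) : ℝ) * ((N - i + k).choose k : ℝ) * ((N - i + k + 1 : ℕ) : ℝ) := by
  rw [show N - i = N - (i - 1) - 1 by omega, show i - k - 1 = i - 1 - k by omega,
    show N - (i - 1) - 1 + k + 1 = N - (i - 1) + k by omega,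
    Nat.cast_factorial_div_factorial_mul_factorial_pred (by omega), mul_right_comm]
  exact_mod_cast Nat.choose_mul_choose_mul_sub (by omega) hk
end

section
/- For all integers N ≥ 1 and 1 ≤ i ≤ N, (N!/((i-1)!·(N-i)!)) · ∫_0^∞ 2x²·e^{-x²}·(1-e^{-x²})^{i-1}·(e^{-x²})^{N-i} dx = (√π/2) · Σ_{k=0}^{i-1} C(N, i-k-1)·C(N-i+k, k)·(-1)^k / √(N-i+k+1). (Equivalently: the mean of the i-th order statistic of N i.i.d. Rayleigh random variables with scale parameter σ = √2/2 equals this alternating sum.) -/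
open Real Finset MeasureTheory
open scoped Nat

/-!
Write `i = j + 1` and `N = j + 1 + d`. Expanding `(1 - e^{-x²})^j` binomially turns the integrand
into a combination of the Gaussian moments `∫_0^∞ x² e^{-c x²} dx = √π / (4 c √c)` with
`c = d + k + 1`. The prefactor `N! / (j! d!)` times `C(j, k)` equals
`C(N, j - k) C(d + k, k) (d + k + 1)`, and the last factor cancels `c` against `c √c`.
-/

theorem integrableOn_sq_mul_exp_neg_mul_sq {c : ℝ} (hc : 0 < c) :
    IntegrableOn (fun x : ℝ => x ^ 2 * exp (-(c * x ^ 2))) (Set.Ioi 0) := by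
  simpa [neg_mul] using integrableOn_rpow_mul_exp_neg_mul_sq hc (s := 2) (by norm_num)

theorem integral_sq_mul_exp_neg_mul_sq {c : ℝ} (hc : 0 < c) :
    ∫ x in Set.Ioi 0, x ^ 2 * exp (-(c * x ^ 2)) = √π / (4 * (c * √c)) := by
  have h := integral_rpow_mul_exp_neg_mul_rpow two_pos (show (-1 : ℝ) < 2 by norm_num) hc
  have gamma : Gamma ((2 + 1) / 2) = √π / 2 := by
    rw [show (2 + 1) / 2 = (1 / 2 : ℝ) + 1 by norm_num, Gamma_add_one (by norm_num),
      Gamma_one_half_eq]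
    ring
  have pow : c ^ (-(2 + 1) / 2 : ℝ) = (c * √c)⁻¹ := by
    rw [show (-(2 + 1) / 2 : ℝ) = -(1 + 1 / 2) by norm_num, rpow_neg hc.le, rpow_add hc,
      rpow_one, sqrt_eq_rpow]
  simp only [rpow_two, neg_mul] at h
  rw [h, gamma, pow]
  field_simp
  norm_num

theorem mul_one_sub_pow_mul_pow {R : Type*} [CommRing R] (t : R) (j d : ℕ) :
    t * (1 - t) ^ j * t ^ d = ∑ k ∈ range (j + 1), (-1) ^ k * j.choose k * t ^ (d + k + 1) := by
  rw [sub_eq_add_neg, add_comm, add_pow, mul_sum, sum_mul]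
  refine sum_congr rfl fun k _ => ?_
  rw [neg_pow]
  ring

theorem exp_neg_sq_pow (x : ℝ) (n : ℕ) : exp (-x ^ 2) ^ n = exp (-(n * x ^ 2)) := by
  rw [← exp_nat_mul, mul_neg]

theorem factorial_mul_choose_eq (j d k : ℕ) (hk : k ≤ j) :
    (j + 1 + d)! * j.choose k =
      j ! * d ! * ((j + 1 + d).choose (j - k) * (d + k).choose k * (d + k + 1)) := by
  have hj := Nat.choose_mul_factorial_mul_factorial hk
  have hN := Nat.choose_mul_factorial_mul_factorial (show j - k ≤ j + 1 + d by omega)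
  rw [show j + 1 + d - (j - k) = d + k + 1 by omega, Nat.factorial_succ] at hN
  have hdk := Nat.choose_mul_factorial_mul_factorial (Nat.le_add_left k d)
  rw [Nat.add_sub_cancel] at hdk
  refine Nat.eq_of_mul_eq_mul_right (Nat.mul_pos k.factorial_pos (j - k).factorial_pos) ?_
  calc (j + 1 + d)! * j.choose k * (k ! * (j - k)!) = (j + 1 + d)! * j ! := by
        rw [← hj]; ring
    _ = _ := by rw [← hN, ← hdk]; ring

theorem two_mul_sq_mul_exp_neg_sq_eq_sum (x : ℝ) (j d : ℕ) :
    2 * x ^ 2 * exp (-x ^ 2) * (1 - exp (-x ^ 2)) ^ j * exp (-x ^ 2) ^ d =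
      ∑ k ∈ range (j + 1),
        2 * (-1) ^ k * j.choose k * (x ^ 2 * exp (-((d + k + 1 : ℕ) * x ^ 2))) := by
  rw [mul_assoc (2 * x ^ 2), mul_assoc (2 * x ^ 2), mul_one_sub_pow_mul_pow, mul_sum]
  refine sum_congr rfl fun k _ => ?_
  rw [exp_neg_sq_pow]
  ring

theorem rayleigh_orderStat_mean_general (N i : ℕ) (hi1 : 1 ≤ i) (hiN : i ≤ N) :
    (N.factorial : ℝ) / ((i - 1).factorial * (N - i).factorial) *
        ∫ x in Set.Ioi (0 : ℝ),
          2 * x ^ 2 * Real.exp (-x ^ 2) * (1 - Real.exp (-x ^ 2)) ^ (i - 1) *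
            (Real.exp (-x ^ 2)) ^ (N - i)
      = Real.sqrt Real.pi / 2 *
          ∑ k ∈ Finset.range i,
            (N.choose (i - k - 1) : ℝ) * ((N - i + k).choose k : ℝ) * (-1) ^ k /
              Real.sqrt ((N - i + k + 1 : ℕ) : ℝ) := by
  obtain ⟨j, rfl⟩ : ∃ j, i = j + 1 := ⟨i - 1, by omega⟩
  obtain ⟨d, rfl⟩ : ∃ d, N = j + 1 + d := ⟨N - (j + 1), by omega⟩
  simp only [Nat.add_sub_cancel, Nat.add_sub_cancel_left, two_mul_sq_mul_exp_neg_sq_eq_sum]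
  rw [integral_finsetSum _ fun k _ =>
    (integrableOn_sq_mul_exp_neg_mul_sq (by positivity)).const_mul _, mul_sum, mul_sum]
  refine sum_congr rfl fun k hk => ?_
  have hkj : k ≤ j := Nat.lt_succ_iff.mp (mem_range.mp hk)
  have hcomb : ((j + 1 + d)! : ℝ) * j.choose k =
      j ! * d ! * ((j + 1 + d).choose (j - k) * (d + k).choose k * (d + k + 1 : ℕ)) := by
    exact_mod_cast factorial_mul_choose_eq j d k hkj
  rw [integral_const_mul, integral_sq_mul_exp_neg_mul_sq (by positivity),
    show j + 1 - k - 1 = j - k by omega]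
  field_simp
  linear_combination 4 * hcomb

/-- The mean of the `i`-th order statistic of `N` i.i.d. Rayleigh(σ = √2/2) random variables:
`(N!/((i-1)!(N-i)!)) ∫_0^∞ 2x² e^{-x²} (1-e^{-x²})^{i-1} (e^{-x²})^{N-i} dx
= (√π/2) Σ_{k=0}^{i-1} C(N,i-k-1) C(N-i+k,k) (-1)^k / √(N-i+k+1)`. -/
theorem rayleigh_orderStat_mean (N i : ℕ) (hN : 1 ≤ N) (hi1 : 1 ≤ i) (hiN : i ≤ N) :
    (N.factorial : ℝ) / ((i - 1).factorial * (N - i).factorial) *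
        ∫ x in Set.Ioi (0 : ℝ),
          2 * x ^ 2 * Real.exp (-x ^ 2) * (1 - Real.exp (-x ^ 2)) ^ (i - 1) *
            (Real.exp (-x ^ 2)) ^ (N - i)
      = Real.sqrt Real.pi / 2 *
          ∑ k ∈ Finset.range i,
            (N.choose (i - k - 1) : ℝ) * ((N - i + k).choose k : ℝ) * (-1) ^ k /
              Real.sqrt ((N - i + k + 1 : ℕ) : ℝ) :=
  rayleigh_orderStat_mean_general N i hi1 hiN
end

section
/- For all integers N ≥ 1 and 1 ≤ i ≤ N, (N!/((i-1)!·(N-i)!)) · ∫_0^∞ 2x³·e^{-x²}·(1-e^{-x²})^{i-1}·(e^{-x²})^{N-i} dx = Σ_{k=1}^{i} 1/(N-k+1). (Equivalently: the second moment of the i-th order statistic of N i.i.d. Rayleigh random variables with scale parameter σ = √2/2 equals the partial harmonic sum Σ_{k=1}^{i} 1/(N-k+1).) -/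
/-!
Write `I m b` for the integral with exponents `m = i - 1` and `b = N - i`. Since
`(1 - t) ^ (m + 1) = (1 - t) ^ m - (1 - t) ^ m * t`, we get `I (m + 1) b = I m b - I m (b + 1)`,
while `I 0 b = ∫ 2 x³ e^{-(b+1) x²} = 1 / (b + 1)²` is a Gamma integral. The closed form
`m! b! / (m + b + 1)! * (H (m + b + 1) - H b)`, with `H` the harmonic numbers, satisfies the same
recurrence and initial values, and the sum in the theorem is `H N - H (N - i)`.
-/

open Real Finset MeasureTheory Set Nat

lemma integral_Ioi_pow_three_mul_exp_neg_mul_sq {c : ℝ} (hc : 0 < c) :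
    ∫ x in Ioi (0 : ℝ), x ^ 3 * exp (-(c * x ^ 2)) = 1 / (2 * c ^ 2) := by
  have h := integral_rpow_mul_exp_neg_mul_rpow (p := 2) (q := 3) (b := c)
    (by norm_num) (by norm_num) hc
  simp only [Real.rpow_ofNat, neg_mul] at h
  rw [h, show ((3 : ℝ) + 1) / 2 = 1 + 1 by norm_num, Real.Gamma_add_one one_ne_zero,
    Real.Gamma_one, show (-(3 + 1) / 2 : ℝ) = (-2 : ℤ) by norm_num, Real.rpow_intCast]
  field_simp

noncomputable def orderStatIntegrand (m b : ℕ) (x : ℝ) : ℝ :=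
  2 * x ^ 3 * exp (-x ^ 2) * (1 - exp (-x ^ 2)) ^ m * exp (-x ^ 2) ^ b

lemma integrableOn_orderStatIntegrand (m b : ℕ) :
    IntegrableOn (orderStatIntegrand m b) (Ioi 0) := by
  have h_gauss : IntegrableOn (fun x : ℝ => x ^ 3 * exp (-x ^ 2)) (Ioi 0) := by
    simpa only [Real.rpow_ofNat, neg_mul, one_mul] using
      integrableOn_rpow_mul_exp_neg_mul_sq (b := 1) one_pos (s := 3) (by norm_num)
  have h_bound (x : ℝ) : ‖(1 - exp (-x ^ 2)) ^ m * exp (-x ^ 2) ^ b‖ ≤ 1 := by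
    have h_pos : 0 < exp (-x ^ 2) := exp_pos _
    have h_le : exp (-x ^ 2) ≤ 1 := exp_le_one_iff.2 (by nlinarith [sq_nonneg x])
    rw [norm_of_nonneg (by positivity)]
    exact mul_le_one₀ (pow_le_one₀ (by linarith) (by linarith)) (by positivity)
      (pow_le_one₀ h_pos.le h_le)
  have h : IntegrableOn (fun x => 2 * (x ^ 3 * exp (-x ^ 2) *
      ((1 - exp (-x ^ 2)) ^ m * exp (-x ^ 2) ^ b))) (Ioi 0) :=
    (h_gauss.mul_bdd (by fun_prop : Continuous _).aestronglyMeasurable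
      (ae_of_all _ h_bound)).const_mul 2
  refine h.congr_fun (fun x _ => ?_) measurableSet_Ioi
  simp only [orderStatIntegrand]
  ring

lemma integral_orderStatIntegrand_zero (b : ℕ) :
    ∫ x in Ioi 0, orderStatIntegrand 0 b x = 1 / ((b : ℝ) + 1) ^ 2 := by
  have h (x : ℝ) :
      orderStatIntegrand 0 b x = 2 * (x ^ 3 * exp (-(((b : ℝ) + 1) * x ^ 2))) := by
    rw [orderStatIntegrand, ← exp_nat_mul, pow_zero, mul_one, mul_assoc _ (exp _), ← exp_add]
    ring_nf
  simp_rw [h, integral_const_mul,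
    integral_Ioi_pow_three_mul_exp_neg_mul_sq (by positivity : (0 : ℝ) < b + 1)]
  field_simp

lemma integral_orderStatIntegrand_succ (m b : ℕ) :
    ∫ x in Ioi 0, orderStatIntegrand (m + 1) b x
      = (∫ x in Ioi 0, orderStatIntegrand m b x)
        - ∫ x in Ioi 0, orderStatIntegrand m (b + 1) x := by
  rw [← integral_sub (integrableOn_orderStatIntegrand m b)
    (integrableOn_orderStatIntegrand m (b + 1))]
  congr 1 with x
  simp only [orderStatIntegrand]
  ring

theorem integral_orderStatIntegrand (m b : ℕ) :
    ∫ x in Ioi 0, orderStatIntegrand m b x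
      = (m ! : ℝ) * b ! / (m + b + 1)! * ((harmonic (m + b + 1) - harmonic b : ℚ) : ℝ) := by
  induction m generalizing b with
  | zero =>
    rw [integral_orderStatIntegrand_zero]
    push_cast [zero_add, harmonic_succ, factorial_succ, factorial_zero]
    field_simp
    ring
  | succ m ih =>
    rw [integral_orderStatIntegrand_succ, ih, ih, show m + (b + 1) + 1 = m + b + 1 + 1 by ring,
      show m + 1 + b + 1 = m + b + 1 + 1 by ring]
    push_cast [harmonic_succ, factorial_succ]
    field_simp
    ring

lemma sum_Icc_one_div_sub_add_one_eq_harmonic_sub {N i : ℕ} (hi : i ≤ N) :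
    ∑ k ∈ Icc 1 i, (1 : ℝ) / ((N - k + 1 : ℕ) : ℝ)
      = ((harmonic N - harmonic (N - i) : ℚ) : ℝ) := by
  induction i with
  | zero => simp
  | succ i ih =>
    obtain ⟨n, hn⟩ : ∃ n, N - i = n + 1 := ⟨N - i - 1, by omega⟩
    rw [sum_Icc_succ_top (by omega), ih (by omega), show N - (i + 1) = n by omega, hn]
    push_cast [harmonic_succ]
    ring

theorem rayleigh_orderStat_second_moment_general (N i : ℕ) (hi1 : 1 ≤ i) (hiN : i ≤ N) :
    (N.factorial : ℝ) / ((i - 1).factorial * (N - i).factorial) *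
        ∫ x in Set.Ioi (0 : ℝ),
          2 * x ^ 3 * Real.exp (-x ^ 2) * (1 - Real.exp (-x ^ 2)) ^ (i - 1) *
            (Real.exp (-x ^ 2)) ^ (N - i)
      = ∑ k ∈ Finset.Icc 1 i, (1 : ℝ) / ((N - k + 1 : ℕ) : ℝ) := by
  change _ * ∫ x in Ioi 0, orderStatIntegrand (i - 1) (N - i) x = _
  rw [integral_orderStatIntegrand, show i - 1 + (N - i) + 1 = N by omega,
    sum_Icc_one_div_sub_add_one_eq_harmonic_sub hiN]
  field_simp

/-- The second moment of the `i`-th order statistic of `N` i.i.d. Rayleigh(σ = √2/2) random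
variables equals the partial harmonic sum:
`(N!/((i-1)!(N-i)!)) ∫_0^∞ 2x³ e^{-x²} (1-e^{-x²})^{i-1} (e^{-x²})^{N-i} dx
= Σ_{k=1}^i 1/(N-k+1)`. -/
theorem rayleigh_orderStat_second_moment (N i : ℕ) (hN : 1 ≤ N) (hi1 : 1 ≤ i) (hiN : i ≤ N) :
    (N.factorial : ℝ) / ((i - 1).factorial * (N - i).factorial) *
        ∫ x in Set.Ioi (0 : ℝ),
          2 * x ^ 3 * Real.exp (-x ^ 2) * (1 - Real.exp (-x ^ 2)) ^ (i - 1) *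
            (Real.exp (-x ^ 2)) ^ (N - i)
      = ∑ k ∈ Finset.Icc 1 i, (1 : ℝ) / ((N - k + 1 : ℕ) : ℝ) :=
  rayleigh_orderStat_second_moment_general N i hi1 hiN
end
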